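/- arXiv:1406.3889 — 4 statements merged into one kernel-verified Lean document; each statement's English description precedes it below -/
import Mathlib

section
/- Let s be a binary sequence of odd period N with ideal two-level autocorrelation, i.e., for every 0 < τ < N, \sum_{i=0}^{N-1} (-1)^{s_{(i+τ) mod N} + s_i} = -1. Then \sum_{i=0}^{N-1}(-1)^{s_i} 2^i times \sum_{j=0}^{N-1}(-1)^{s_j} 2^{(N-j) mod N} is congruent to N + 1 modulo 2^N - 1. -/
theorem stmt3 (N : ℕ) (hN : 1 < N) (hodd : Odd N) (s : ℕ → Fin 2)
    (hper : ∀ i, s (i + N) = s i)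
    (hac : ∀ τ, 0 < τ → τ < N →
      (∑ i ∈ Finset.range N, (-1 : ℤ) ^ ((s ((i + τ) % N) : ℕ) + (s i : ℕ))) = -1) :
    (∑ i ∈ Finset.range N, (-1 : ℤ) ^ (s i : ℕ) * 2 ^ i) *
      (∑ j ∈ Finset.range N, (-1 : ℤ) ^ (s j : ℕ) * 2 ^ ((N - j) % N)) ≡
      (N : ℤ) + 1 [ZMOD (2 ^ N - 1)] := by
  have h1 : (1:ℕ) ≤ 2^N := Nat.one_le_two_pow
  set M : ℕ := 2^N - 1 with hM
  have hmod : ((2:ℤ)^N - 1) = (M : ℤ) := by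
    rw [hM]; push_cast [Nat.cast_sub h1]; ring
  rw [hmod, ← ZMod.intCast_eq_intCast_iff]
  push_cast
  have h2 : (2:ZMod M)^N = 1 := by
    have h2' : ((2^N - 1 : ℕ) : ZMod M) = 0 := by
      rw [← hM]; exact ZMod.natCast_self M
    push_cast [Nat.cast_sub h1] at h2'
    linear_combination h2'
  have hpow : ∀ a b : ℕ, a % N = b % N → (2:ZMod M)^a = (2:ZMod M)^b := by
    intro a b h
    rw [pow_eq_pow_mod a h2, h, ← pow_eq_pow_mod b h2]
  have hmmL : ∀ y x : ℕ, (y + x % N) % N = (y + x) % N := fun y x =>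
    Nat.ModEq.add_left y (Nat.mod_modEq x N)
  have hmmR : ∀ x c : ℕ, (x % N + c) % N = (x + c) % N := fun x c =>
    Nat.ModEq.add_right c (Nat.mod_modEq x N)
  rw [Finset.sum_mul_sum, Finset.sum_comm]
  have step1 : ∀ j ∈ Finset.range N,
      (∑ i ∈ Finset.range N,
        (-1:ZMod M)^(s i : ℕ) * 2^i * ((-1)^(s j : ℕ) * 2^((N-j)%N)))
      = ∑ τ ∈ Finset.range N,
        (-1:ZMod M)^((s ((j+τ)%N) : ℕ) + (s j : ℕ)) * 2^τ := by
    intro j hj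
    rw [Finset.mem_range] at hj
    refine Finset.sum_nbij' (fun i => (i + (N - j)) % N) (fun τ => (j + τ) % N)
      ?_ ?_ ?_ ?_ ?_
    · intro a ha; rw [Finset.mem_range] at *; exact Nat.mod_lt _ (by omega)
    · intro a ha; rw [Finset.mem_range] at *; exact Nat.mod_lt _ (by omega)
    · intro a ha; rw [Finset.mem_range] at ha
      rw [hmmL, show j + (a + (N - j)) = a + N by omega, Nat.add_mod_right,
        Nat.mod_eq_of_lt ha]
    · intro a ha; rw [Finset.mem_range] at ha
      rw [hmmR, show j + a + (N - j) = a + N by omega, Nat.add_mod_right,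
        Nat.mod_eq_of_lt ha]
    · intro a ha; rw [Finset.mem_range] at ha
      have hs : (j + (a + (N - j)) % N) % N = a := by
        rw [hmmL, show j + (a + (N - j)) = a + N by omega, Nat.add_mod_right,
          Nat.mod_eq_of_lt ha]
      rw [hs, pow_add]
      have hp : (2:ZMod M)^a * 2^((N-j)%N) = 2^((a + (N - j)) % N) := by
        rw [← pow_add]
        exact hpow _ _ (by rw [hmmL, Nat.mod_mod_of_dvd _ (dvd_refl N)])
      linear_combination ((-1:ZMod M)^(s a : ℕ) * (-1:ZMod M)^(s j : ℕ)) * hp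
  rw [Finset.sum_congr rfl step1, Finset.sum_comm]
  have step2 : ∀ τ ∈ Finset.range N,
      (∑ j ∈ Finset.range N, (-1:ZMod M)^((s ((j+τ)%N) : ℕ) + (s j : ℕ)) * 2^τ)
      = (if τ = 0 then (N : ZMod M) else -1) * 2^τ := by
    intro τ hτ
    rw [Finset.mem_range] at hτ
    rw [← Finset.sum_mul]
    congr 1
    rcases Nat.eq_zero_or_pos τ with h0 | h0
    · subst h0; rw [if_pos rfl]
      have hone : ∀ j ∈ Finset.range N,
          ((-1:ZMod M))^((s ((j+0)%N) : ℕ) + (s j : ℕ)) = 1 := by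
        intro j hj
        rw [Finset.mem_range] at hj
        rw [Nat.add_zero, Nat.mod_eq_of_lt hj]
        exact Even.neg_one_pow ⟨(s j : ℕ), rfl⟩
      rw [Finset.sum_congr rfl hone]
      simp
    · rw [if_neg (by omega)]
      have hc : ((∑ i ∈ Finset.range N,
          (-1 : ℤ) ^ ((s ((i + τ) % N) : ℕ) + (s i : ℕ)) : ℤ) : ZMod M)
          = ((-1 : ℤ) : ZMod M) := by rw [hac τ h0 hτ]
      push_cast at hc
      exact hc
  rw [Finset.sum_congr rfl step2]
  have hsplit : ∀ τ ∈ Finset.range N,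
      (if τ = 0 then (N : ZMod M) else -1) * 2^τ
      = (-1) * 2^τ + (if τ = 0 then ((N : ZMod M) + 1) * 2^τ else 0) := by
    intro τ _
    rcases eq_or_ne τ 0 with h | h <;> simp [h] <;> ring
  rw [Finset.sum_congr rfl hsplit, Finset.sum_add_distrib]
  have hgeom : (∑ τ ∈ Finset.range N, (2:ZMod M)^τ) = 0 := by
    have hg := geom_sum_mul (2:ZMod M) N
    have h21 : (2:ZMod M) - 1 = 1 := by norm_num
    rw [h2, h21, mul_one, sub_self] at hg
    exact hg
  have h01 : (∑ τ ∈ Finset.range N,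
      (if τ = 0 then ((N : ZMod M) + 1) * 2^τ else 0)) = (N : ZMod M) + 1 := by
    rw [Finset.sum_eq_single 0]
    · simp
    · intro b _ hb; simp [hb]
    · intro h; exact absurd (Finset.mem_range.mpr (by omega)) h
  have hneg : (∑ x ∈ Finset.range N, (-1:ZMod M) * 2^x) = 0 := by
    rw [← Finset.mul_sum, hgeom, mul_zero]
  rw [h01, hneg, zero_add]
end

section
/- Let s be a binary sequence of odd period N with ideal two-level autocorrelation, and suppose gcd(N+1, 2^N - 1) = 1. Then gcd(S(2), 2^N - 1) = 1, where S(2) = \sum_{i=0}^{N-1} s_i 2^i; hence the 2-adic complexity of s is maximal, equal to log_2(2^N - 1). -/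
theorem stmt5 (N : ℕ) (hN : 1 < N) (hodd : Odd N) (s : ℕ → Fin 2)
    (hper : ∀ i, s (i + N) = s i)
    (hac : ∀ τ, 0 < τ → τ < N →
      (∑ i ∈ Finset.range N, (-1 : ℤ) ^ ((s ((i + τ) % N) : ℕ) + (s i : ℕ))) = -1)
    (hg : Nat.gcd (N + 1) (2 ^ N - 1) = 1) :
    Nat.gcd (∑ i ∈ Finset.range N, (s i : ℕ) * 2 ^ i) (2 ^ N - 1) = 1 := by
  haveI : NeZero N := ⟨by omega⟩
  set M : ℕ := 2 ^ N - 1 with hMdef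
  have h2N' : 2 ≤ 2 ^ N := by
    calc 2 = 2 ^ 1 := by norm_num
    _ ≤ 2 ^ N := Nat.pow_le_pow_right (by norm_num) (by omega)
  -- 2^N = 1 in ZMod M
  have h2N : (2 : ZMod M) ^ N = 1 := by
    have h1 : ((2 ^ N : ℕ) : ZMod M) = ((M + 1 : ℕ) : ZMod M) := by
      congr 1; omega
    push_cast at h1
    rw [ZMod.natCast_self] at h1
    simpa using h1
  -- pow mod lemma
  have hpm : ∀ i : ℕ, (2 : ZMod M) ^ (i % N) = 2 ^ i := by
    intro i
    conv_rhs => rw [← Nat.mod_add_div i N]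
    rw [pow_add, pow_mul, h2N, one_pow, mul_one]
  -- periodicity for multiples
  have hper' : ∀ i k, s (i + N * k) = s i := by
    intro i k
    induction k with
    | zero => simp
    | succ k ih => rw [Nat.mul_succ, ← Nat.add_assoc, hper, ih]
  have hsmod : ∀ i, s (i % N) = s i := by
    intro i
    conv_rhs => rw [← Nat.mod_add_div i N]
    rw [hper']
  -- the sign sequence and the exponential
  set t : ℕ → ZMod M := fun i => (-1 : ZMod M) ^ ((s i : ℕ)) with ht
  set e : ZMod N → ZMod M := fun a => (2 : ZMod M) ^ a.val with he
  have e_cast : ∀ i : ℕ, e ((i : ZMod N)) = 2 ^ i := by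
    intro i
    simp only [he, ZMod.val_natCast]
    exact hpm i
  have e_add : ∀ a b : ZMod N, e (a + b) = e a * e b := by
    intro a b
    simp only [he, ZMod.val_add]
    rw [hpm, pow_add]
  have e_zero : e 0 = 1 := by simp [he, ZMod.val_zero]
  set t' : ZMod N → ZMod M := fun a => t a.val with ht'
  have t'_cast : ∀ i : ℕ, t' ((i : ZMod N)) = t i := by
    intro i
    simp only [ht', ht, ZMod.val_natCast, hsmod]
  -- sum conversion
  have hsum : ∀ f : ZMod N → ZMod M,
      (∑ a : ZMod N, f a) = ∑ i ∈ Finset.range N, f (i : ZMod N) := by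
    intro f
    refine Finset.sum_nbij' (fun a => a.val) (fun i => (i : ZMod N)) ?_ ?_ ?_ ?_ ?_
    · intro a _; exact Finset.mem_range.mpr (ZMod.val_lt a)
    · intro i _; exact Finset.mem_univ _
    · intro a _; exact ZMod.natCast_zmod_val a
    · intro i hi; exact ZMod.val_natCast_of_lt (Finset.mem_range.mp hi)
    · intro a _; rw [ZMod.natCast_zmod_val]
  -- sum of e over all elements is 0
  have hesum : (∑ a : ZMod N, e a) = 0 := by
    rw [hsum]
    have : (∑ i ∈ Finset.range N, e (i : ZMod N)) = ∑ i ∈ Finset.range N, (2 : ZMod M) ^ i :=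
      Finset.sum_congr rfl fun i _ => e_cast i
    rw [this]
    have hg := geom_sum_mul (2 : ZMod M) N
    rw [h2N] at hg
    linear_combination hg
  -- autocorrelation in ZMod-indexed form
  have hinner : ∀ c : ZMod N, c ≠ 0 → (∑ b : ZMod N, t' (b + c) * t' b) = -1 := by
    intro c hc
    have hcv : 0 < c.val := by
      rcases Nat.eq_zero_or_pos c.val with h | h
      · exact absurd ((ZMod.val_eq_zero c).mp h) hc
      · exact h
    have hcl : c.val < N := ZMod.val_lt c
    have hz := hac c.val hcv hcl
    have : (∑ b : ZMod N, t' (b + c) * t' b)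
        = ∑ i ∈ Finset.range N, t ((i + c.val) % N) * t i := by
      rw [hsum]
      refine Finset.sum_congr rfl fun i _ => ?_
      have h1 : ((i : ZMod N) + c) = (((i + c.val : ℕ)) : ZMod N) := by
        push_cast [ZMod.natCast_zmod_val]
        ring
      rw [h1, t'_cast, t'_cast]
      have h2 : t ((i + c.val) % N) = t (i + c.val) := by
        simp only [ht]; rw [hsmod]
      rw [h2]
    rw [this]
    have : (∑ i ∈ Finset.range N, t ((i + c.val) % N) * t i)
        = ((∑ i ∈ Finset.range N, (-1 : ℤ) ^ ((s ((i + c.val) % N) : ℕ) + (s i : ℕ)) : ℤ) : ZMod M) := by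
      push_cast
      refine Finset.sum_congr rfl fun i _ => ?_
      rw [pow_add]
    rw [this, hz]
    push_cast
    ring
  have hinner0 : (∑ b : ZMod N, t' (b + 0) * t' b) = (N : ZMod M) := by
    have : ∀ b : ZMod N, t' (b + 0) * t' b = 1 := by
      intro b
      rw [add_zero, ht', ht, ← pow_add, ← two_mul, pow_mul]
      norm_num
    rw [Finset.sum_congr rfl fun b _ => this b]
    simp [ZMod.card]
  -- main identity : T * T' = N + 1
  set A : ZMod M := ∑ a : ZMod N, t' a * e a with hA
  set B : ZMod M := ∑ a : ZMod N, t' a * e (-a) with hB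
  have hAB : A * B = (N : ZMod M) + 1 := by
    rw [hA, hB, Finset.sum_mul_sum]
    have step1 : (∑ a : ZMod N, ∑ b : ZMod N, (t' a * e a) * (t' b * e (-b)))
        = ∑ b : ZMod N, ∑ c : ZMod N, (t' (b + c) * t' b) * e c := by
      rw [Finset.sum_comm]
      refine Finset.sum_congr rfl fun b _ => ?_
      refine Fintype.sum_equiv (Equiv.subRight b) _ _ fun a => ?_
      simp only [Equiv.subRight_apply]
      have h1 : b + (a - b) = a := by ring
      have h2 : e (a - b) = e a * e (-b) := by
        rw [← e_add]
        congr 1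
        ring
      rw [h1, h2]
      ring
    rw [step1, Finset.sum_comm]
    have step2 : (∑ c : ZMod N, ∑ b : ZMod N, (t' (b + c) * t' b) * e c)
        = ∑ c : ZMod N, (∑ b : ZMod N, t' (b + c) * t' b) * e c := by
      refine Finset.sum_congr rfl fun c _ => ?_
      rw [Finset.sum_mul]
    rw [step2]
    have step3 : ∀ c : ZMod N,
        (∑ b : ZMod N, t' (b + c) * t' b) * e c
          = -(e c) + (if c = 0 then (N : ZMod M) + 1 else 0) := by
      intro c
      by_cases hc : c = 0
      · subst hc
        rw [hinner0, e_zero, if_pos rfl]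
        ring
      · rw [hinner c hc, if_neg hc]
        ring
    rw [Finset.sum_congr rfl fun c _ => step3 c, Finset.sum_add_distrib]
    rw [Finset.sum_neg_distrib, hesum, Finset.sum_ite_eq']
    simp
  -- relate A to S and B to S'
  set S : ℕ := ∑ i ∈ Finset.range N, (s i : ℕ) * 2 ^ i with hS
  set S' : ℕ := ∑ i ∈ Finset.range N, (s i : ℕ) * 2 ^ ((N - 1) * i) with hS'
  have hts : ∀ i, t i = 1 - 2 * ((s i : ℕ) : ZMod M) := by
    intro i
    have : (s i : ℕ) = 0 ∨ (s i : ℕ) = 1 := by omega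
    rcases this with h | h <;> rw [ht] <;> simp [h] <;> ring
  have hAe : A = -2 * (S : ZMod M) := by
    rw [hA, hsum]
    have : (∑ i ∈ Finset.range N, t' (i : ZMod N) * e (i : ZMod N))
        = ∑ i ∈ Finset.range N, ((2:ZMod M) ^ i - 2 * (((s i : ℕ) : ZMod M) * 2 ^ i)) := by
      refine Finset.sum_congr rfl fun i _ => ?_
      rw [t'_cast, e_cast, hts]
      ring
    rw [this, Finset.sum_sub_distrib]
    have hgeo : (∑ i ∈ Finset.range N, (2 : ZMod M) ^ i) = 0 := by
      have hg := geom_sum_mul (2 : ZMod M) N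
      rw [h2N] at hg
      linear_combination hg
    rw [hgeo, ← Finset.mul_sum, hS]
    push_cast
    ring
  have hneg1 : ((N - 1 : ℕ) : ZMod N) = -1 := by
    have h1 : ((N - 1 : ℕ) : ZMod N) + ((1 : ℕ) : ZMod N) = ((N - 1 + 1 : ℕ) : ZMod N) := by
      rw [Nat.cast_add]
    rw [show N - 1 + 1 = N by omega, ZMod.natCast_self] at h1
    push_cast at h1
    linear_combination h1
  have hBe : B = -2 * (S' : ZMod M) := by
    rw [hB]
    have hrw : (∑ a : ZMod N, t' a * e (-a))
        = ∑ i ∈ Finset.range N, t i * (2 : ZMod M) ^ ((N - 1) * i) := by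
      rw [hsum]
      refine Finset.sum_congr rfl fun i _ => ?_
      rw [t'_cast]
      congr 1
      have : (-(i : ZMod N)) = (((N - 1) * i : ℕ) : ZMod N) := by
        push_cast [hneg1]
        ring
      rw [this, e_cast]
    rw [hrw]
    have : (∑ i ∈ Finset.range N, t i * (2 : ZMod M) ^ ((N - 1) * i))
        = ∑ i ∈ Finset.range N, ((2:ZMod M) ^ ((N-1)*i) - 2 * (((s i : ℕ) : ZMod M) * 2 ^ ((N-1)*i))) := by
      refine Finset.sum_congr rfl fun i _ => ?_
      rw [hts]
      ring
    rw [this, Finset.sum_sub_distrib]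
    have hgeo2 : (∑ i ∈ Finset.range N, (2 : ZMod M) ^ ((N - 1) * i)) = 0 := by
      have h1 : (∑ i ∈ Finset.range N, (2 : ZMod M) ^ ((N - 1) * i))
          = ∑ i ∈ Finset.range N, e (-(i : ZMod N)) := by
        refine Finset.sum_congr rfl fun i _ => ?_
        have : (-(i : ZMod N)) = (((N - 1) * i : ℕ) : ZMod N) := by
          push_cast [hneg1]
          ring
        rw [this, e_cast]
      rw [h1, ← hsum fun a => e (-a)]
      rw [← hesum]
      exact Fintype.sum_equiv (Equiv.neg _) _ _ fun c => rfl
    rw [hgeo2, ← Finset.mul_sum, hS']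
    push_cast
    ring
  -- conclude
  have key : (S : ZMod M) * (4 * (S' : ZMod M)) = ((N + 1 : ℕ) : ZMod M) := by
    have := hAB
    rw [hAe, hBe] at this
    push_cast
    linear_combination this
  have hu : IsUnit ((N + 1 : ℕ) : ZMod M) := (ZMod.isUnit_iff_coprime _ _).mpr hg
  rw [← key] at hu
  have hSu : IsUnit ((S : ℕ) : ZMod M) := isUnit_of_mul_isUnit_left hu
  exact (ZMod.isUnit_iff_coprime _ _).mp hSu
end

section
/- If p is a prime with p ≡ 3 (mod 4) and N = p, then gcd(N+1, 2^N - 1) = 1. -/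
theorem stmt8 (p N : ℕ) (hp : p.Prime) (h4 : p % 4 = 3) (hN : N = p) :
    Nat.gcd (N + 1) (2 ^ N - 1) = 1 := by
  subst hN
  by_contra hne
  set d := Nat.gcd (N + 1) (2 ^ N - 1) with hd
  have hne' : d ≠ 1 := hne
  set q := d.minFac with hq
  have hqp : q.Prime := Nat.minFac_prime hne'
  have hqd : q ∣ d := Nat.minFac_dvd d
  have hq1 : q ∣ N + 1 := hqd.trans (Nat.gcd_dvd_left _ _)
  have hq2 : q ∣ 2 ^ N - 1 := hqd.trans (Nat.gcd_dvd_right _ _)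
  have hp1 : 1 ≤ 2 ^ N := Nat.one_le_two_pow
  -- q is odd
  have hqodd : q ≠ 2 := by
    intro h
    have h2 : (2 : ℕ) ∣ 2 ^ N - 1 := h ▸ hq2
    have h2' : (2 : ℕ) ∣ 2 ^ N := dvd_pow_self 2 hp.pos.ne'
    have : (2 : ℕ) ∣ 2 ^ N - (2 ^ N - 1) := Nat.dvd_sub h2' h2
    omega
  have hq2lt : 2 < q := lt_of_le_of_ne hqp.two_le (fun h => hqodd h.symm)
  haveI : Fact q.Prime := ⟨hqp⟩
  -- 2 ^ N = 1 in ZMod q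
  have hmod : (2 : ZMod q) ^ N = 1 := by
    have h0 : ((2 ^ N - 1 : ℕ) : ZMod q) = 0 :=
      (ZMod.natCast_eq_zero_iff _ _).mpr hq2
    rw [Nat.cast_sub hp1] at h0
    push_cast at h0
    have := sub_eq_zero.mp h0
    exact this
  have hord : orderOf (2 : ZMod q) ∣ N := orderOf_dvd_of_pow_eq_one hmod
  have h2ne : (2 : ZMod q) ≠ 0 := by
    intro h
    have h2 : ((2 : ℕ) : ZMod q) = 0 := by exact_mod_cast h
    have : (q : ℕ) ∣ 2 := (ZMod.natCast_eq_zero_iff 2 q).mp h2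
    have := Nat.le_of_dvd (by norm_num) this
    omega
  rcases (Nat.dvd_prime hp).mp hord with h1 | hNord
  · have h21 : (2 : ZMod q) = 1 := orderOf_eq_one_iff.mp h1
    have h10 : (1 : ZMod q) = 0 := by
      have := sub_eq_zero.mpr h21
      norm_num at this
    have : (q : ℕ) ∣ 1 := (ZMod.natCast_eq_zero_iff 1 q).mp (by exact_mod_cast h10)
    have := Nat.le_of_dvd one_pos this
    omega
  · have hfermat : (2 : ZMod q) ^ (q - 1) = 1 := ZMod.pow_card_sub_one_eq_one h2ne
    have hdvd : N ∣ q - 1 := hNord ▸ orderOf_dvd_of_pow_eq_one hfermat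
    have hqle : q ≤ N + 1 := Nat.le_of_dvd (by omega) hq1
    have : N ≤ q - 1 := Nat.le_of_dvd (by omega) hdvd
    have hqeq : q = N + 1 := by omega
    have h2q : 2 ∣ q := by omega
    have : q = 2 := ((Nat.Prime.eq_one_or_self_of_dvd hqp 2 h2q).resolve_left (by norm_num)).symm
    omega
end

section
/- If p and p+2 are both odd primes and N = p(p+2), then N + 1 = (p+1)^2 and gcd(N+1, 2^N - 1) = 1. -/
theorem stmt14 (p N : ℕ) (hp : p.Prime) (hpo : Odd p) (hp2 : (p + 2).Prime)
    (hN : N = p * (p + 2)) :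
    N + 1 = (p + 1) ^ 2 ∧ Nat.gcd (N + 1) (2 ^ N - 1) = 1 := by
  subst hN
  have hp3 : 3 ≤ p := hp.two_le.lt_of_ne (fun h => by rw [← h] at hpo; exact (Nat.not_odd_iff_even.mpr (by norm_num)) hpo)
  refine ⟨by ring, ?_⟩
  have heq : p * (p + 2) + 1 = (p + 1) ^ 2 := by ring
  rw [heq]
  set N := p * (p + 2) with hNdef
  have hNpos : 0 < N := by positivity
  have h2N : 1 ≤ 2 ^ N := Nat.one_le_two_pow
  rw [← Nat.coprime_iff_gcd_eq_one]
  apply Nat.Coprime.pow_left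
  by_contra hcop
  obtain ⟨r, hr, hr1, hr2⟩ := Nat.Prime.not_coprime_iff_dvd.mp hcop
  -- r is odd, in fact r ≥ 3
  have hrne2 : r ≠ 2 := by
    rintro rfl
    have h2 : (2 : ℕ) ∣ 2 ^ N - (2 ^ N - 1) := Nat.dvd_sub (dvd_pow_self 2 hNpos.ne') hr2
    rw [show 2 ^ N - (2 ^ N - 1) = 1 by omega] at h2
    exact absurd h2 (by norm_num)
  have hr3 : 3 ≤ r := by
    have := hr.two_le; omega
  -- r ≤ p : r divides p+1 which is even, and r is odd so r ≠ p+1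
  have hrlep : r ≤ p := by
    have hle : r ≤ p + 1 := Nat.le_of_dvd (by omega) hr1
    rcases hle.lt_or_eq with h | h
    · omega
    · exfalso
      have : Even (p + 1) := Odd.add_one hpo
      rw [← h] at this
      exact (hr.even_iff.mp this) |> hrne2
  haveI : Fact r.Prime := ⟨hr⟩
  -- order of 2 mod r
  set d := orderOf (2 : ZMod r) with hd
  have h2ne : (2 : ZMod r) ≠ 0 := by
    intro h
    have : ((2 : ℕ) : ZMod r) = 0 := by exact_mod_cast h
    rw [ZMod.natCast_eq_zero_iff] at this
    have := Nat.le_of_dvd (by norm_num) this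
    omega
  have hdvd1 : d ∣ r - 1 := ZMod.orderOf_dvd_card_sub_one h2ne
  have hpow : (2 : ZMod r) ^ N = 1 := by
    have : ((2 ^ N - 1 : ℕ) : ZMod r) = 0 := (ZMod.natCast_eq_zero_iff _ _).mpr hr2
    have h' : ((2 ^ N : ℕ) : ZMod r) - ((1 : ℕ) : ZMod r) = 0 := by
      rw [← Nat.cast_sub h2N]; exact this
    push_cast at h'
    linear_combination h'
  have hdvdN : d ∣ N := orderOf_dvd_of_pow_eq_one hpow
  have hdpos : 0 < d := by
    rcases Nat.eq_zero_or_pos d with h | h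
    · rw [h] at hdvdN; exact absurd (Nat.eq_zero_of_zero_dvd hdvdN) hNpos.ne'
    · exact h
  have hdlt : d < p := by
    have : d ≤ r - 1 := Nat.le_of_dvd (by omega) hdvd1
    omega
  -- d divides p*(p+2); since d < p, d = 1
  have hd1 : d = 1 := by
    rcases hp.eq_one_or_self_of_dvd (d.gcd p) (Nat.gcd_dvd_right d p) with h | h
    · -- gcd d p = 1, so d ∣ p + 2
      have hcp : Nat.Coprime d p := h
      have : d ∣ p + 2 := hcp.dvd_of_dvd_mul_left hdvdN
      rcases (hp2.eq_one_or_self_of_dvd d this) with h2 | h2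
      · exact h2
      · omega
    · have : p ∣ d := h ▸ Nat.gcd_dvd_left d p
      have := Nat.le_of_dvd hdpos this
      omega
  have h21 : (2 : ZMod r) = 1 := orderOf_eq_one_iff.mp hd1
  have : ((2 : ℕ) : ZMod r) = ((1 : ℕ) : ZMod r) := by push_cast; exact h21
  rw [ZMod.natCast_eq_natCast_iff] at this
  have := (Nat.modEq_iff_dvd' (by norm_num)).mp this.symm
  have := Nat.le_of_dvd (by norm_num) this
  omega
end
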